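/- Let (M, φ, φ̂, ψ) be a quasi-Poisson module over a Lie–Rinehart pair (A, k) with QP-algebra g = A ⊕ k and projection π. Then L(M) := ℂ[t₀^{±1}] ⊗ M is a module over the Lie algebra L(g) = ℂ[t₀^{±1}] ⊗ g (with bracket [t₀^r ⊗ x, t₀^s ⊗ y] = t₀^{r+s} ⊗ ({x,y} − r x·π(y) + s π(x)·y)), under the action (t₀^r ⊗ x) * (t₀^s ⊗ ω) := t₀^{r+s} ⊗ (ψ_x(ω) − r φ̂_x(ω) + s φ_{π(x)}(ω)). -/

import Mathlib

section

variable {A : Type*} [CommRing A] [Algebra ℂ A]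
variable {L : Type*} [LieRing L] [LieAlgebra ℂ L] [Module A L]

/-- The commutative product `(a⊕δ)·(b⊕σ) = ab ⊕ (aσ + bδ)` on `g = A ⊕ k`. -/
def qpMul (x y : A × L) : A × L := (x.1 * y.1, x.1 • y.2 + y.1 • x.2)

/-- The bracket `{a⊕δ, b⊕σ} = (δ(b) − σ(a)) ⊕ [δ,σ]` on `g = A ⊕ k`. -/
def qpBracket (act : L →ₗ⁅ℂ⁆ Derivation ℂ A A) (x y : A × L) : A × L :=
  (act x.2 y.1 - act y.2 x.1, ⁅x.2, y.2⁆)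

/-- The degree-component of the bracket of `L(g) = ℂ[t₀^{±1}] ⊗ g`:
`[t₀^r ⊗ x, t₀^s ⊗ y] = t₀^{r+s} ⊗ ({x,y} − r·x·π(y) + s·π(x)·y)`. -/
def lBracket (act : L →ₗ⁅ℂ⁆ Derivation ℂ A A) (r : ℤ) (x : A × L) (s : ℤ) (y : A × L) :
    A × L :=
  qpBracket act x y - r • qpMul x (y.1, 0) + s • qpMul (x.1, 0) y

end

/-!
Write the action of `t₀^r ⊗ x` on the degree-`p` part of `L(M)` as the operator
`ψ_x − r φ̂_x + p φ_{π(x)}` on `M`. The module identity then becomes an identity between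
operators that is polynomial in `r, s, p`. Expanding the left side by the QP-module axioms,
the terms without `r, s, p` cancel because `ψ` is a Lie algebra map, the `r` and `s` terms
by the `[φ̂, ψ]` relation, the `p` terms by the `[ψ, φ]` relation, the `rs` term by the
`[φ̂, φ̂]` relation, and the `rp`, `sp`, `p²` terms because `φ̂` commutes with `φ` and `φ(A)`
is commutative.
-/

section QPModule

variable {A : Type*} [CommRing A] {L : Type*} [LieRing L]

theorem qpMul_comm [Module A L] (x y : A × L) : qpMul x y = qpMul y x := by
  simp only [qpMul, mul_comm, add_comm]

@[simp]
theorem qpMul_fst [Module A L] (x y : A × L) : (qpMul x y).1 = x.1 * y.1 := rfl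

variable [Algebra ℂ A] [LieAlgebra ℂ L]

theorem qpBracket_swap (act : L →ₗ⁅ℂ⁆ Derivation ℂ A A) (x y : A × L) :
    qpBracket act y x = -qpBracket act x y :=
  Prod.ext (neg_sub _ _).symm (lie_skew y.2 x.2).symm

variable [Module A L] {R : Type*} [Ring R] [Algebra ℂ R]

structure IsQPModule (act : L →ₗ⁅ℂ⁆ Derivation ℂ A A) (φ : A →ₐ[ℂ] R)
    (ψ φh : (A × L) →ₗ[ℂ] R) : Prop where
  map_qpBracket : ∀ x y : A × L, ψ (qpBracket act x y) = ⁅ψ x, ψ y⁆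
  lie_φh_φh : ∀ x y : A × L, ⁅φh x, φh y⁆ = φh (qpMul x (y.1, 0)) - φh (qpMul (x.1, 0) y)
  φh_qpMul_left : ∀ (a : A) (x : A × L), φh (qpMul (a, 0) x) = φ a * φh x
  lie_φh_φ : ∀ (x : A × L) (a : A), ⁅φh x, φ a⁆ = 0
  lie_φh_ψ : ∀ x y : A × L,
    ⁅φh x, ψ y⁆ = φh (qpBracket act x y) - φ y.1 * ψ x + ψ (qpMul x (y.1, 0))
  lie_ψ_φ : ∀ (x : A × L) (a : A), ⁅ψ x, φ a⁆ = φ (act x.2 a)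

/-- `(t₀^r ⊗ x) * (t₀^p ⊗ ω) = t₀^{r+p} ⊗ lAction φ ψ φh r x p ω`. -/
def lAction (φ : A →ₐ[ℂ] R) (ψ φh : (A × L) →ₗ[ℂ] R) (r : ℤ) (x : A × L) (p : ℤ) : R :=
  ψ x - r • φh x + p • φ x.1

namespace IsQPModule

variable {act : L →ₗ⁅ℂ⁆ Derivation ℂ A A} {φ : A →ₐ[ℂ] R} {ψ φh : (A × L) →ₗ[ℂ] R}

theorem commute_φh_φ (hM : IsQPModule act φ ψ φh) (x : A × L) (a : A) :
    Commute (φh x) (φ a) :=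
  sub_eq_zero.mp ((Ring.lie_def _ _).symm.trans (hM.lie_φh_φ x a))

theorem φh_qpMul_right (hM : IsQPModule act φ ψ φh) (x y : A × L) :
    φh (qpMul x (y.1, 0)) = φ y.1 * φh x := by
  rw [qpMul_comm, hM.φh_qpMul_left]

theorem ψ_qpMul_right (hM : IsQPModule act φ ψ φh) (x y : A × L) :
    ψ (qpMul x (y.1, 0)) = ⁅φh x, ψ y⁆ - φh (qpBracket act x y) + φ y.1 * ψ x := by
  rw [hM.lie_φh_ψ]; abel

theorem ψ_qpMul_left (hM : IsQPModule act φ ψ φh) (x y : A × L) :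
    ψ (qpMul (x.1, 0) y) = ⁅φh y, ψ x⁆ + φh (qpBracket act x y) + φ x.1 * ψ y := by
  rw [hM.lie_φh_ψ, qpBracket_swap, qpMul_comm, map_neg]; abel

theorem φ_qpBracket_fst (hM : IsQPModule act φ ψ φh) (x y : A × L) :
    φ (qpBracket act x y).1 = ⁅ψ x, φ y.1⁆ - ⁅ψ y, φ x.1⁆ := by
  rw [hM.lie_ψ_φ, hM.lie_ψ_φ, ← map_sub]; rfl

theorem lAction_lBracket (hM : IsQPModule act φ ψ φh) (r s p : ℤ) (x y : A × L) :
    lAction φ ψ φh (r + s) (lBracket act r x s y) p =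
      lAction φ ψ φh r x (s + p) * lAction φ ψ φh s y p -
        lAction φ ψ φh s y (r + p) * lAction φ ψ φh r x p := by
  have hφh : φh x * φh y - φh y * φh x = φ y.1 * φh x - φ x.1 * φh y := by
    simpa only [Ring.lie_def, hM.φh_qpMul_right, hM.φh_qpMul_left] using hM.lie_φh_φh x y
  have hxy := (hM.commute_φh_φ x y.1).eq
  have hyx := (hM.commute_φh_φ y x.1).eq
  have hφ := ((Commute.all x.1 y.1).map φ).eq
  simp only [lAction, lBracket, Prod.fst_sub, Prod.fst_add, Prod.smul_fst, qpMul_fst, map_add,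
    map_sub, map_zsmul, map_mul, hM.map_qpBracket, hM.φh_qpMul_right, hM.φh_qpMul_left,
    hM.ψ_qpMul_right, hM.ψ_qpMul_left, hM.φ_qpBracket_fst, Ring.lie_def]
  linear_combination
    (norm := (simp only [mul_add, add_mul, mul_sub, sub_mul, smul_mul_assoc, mul_smul_comm]; module))
    (-(r * s)) • hφh + (r * p) • hxy - (s * p) • hyx - (r * p + p * p) • hφ

end IsQPModule

end QPModule

/-- For a quasi-Poisson module `(M, φ, φ̂, ψ)` over a Lie–Rinehart pair `(A, k)`,
`L(M) = ℂ[t₀^{±1}] ⊗ M` is a module over the Lie algebra `L(g) = ℂ[t₀^{±1}] ⊗ g` via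
`(t₀^r ⊗ x) * (t₀^s ⊗ ω) = t₀^{r+s} ⊗ (ψ_x(ω) − r φ̂_x(ω) + s φ_{π(x)}(ω))`:
expressed on pure tensors (which span everything, the degree of an action being the
sum of the degrees), the defining identity `[u,v]•w = u•(v•w) − v•(u•w)` holds. -/
theorem lM_is_module (A : Type*) [CommRing A] [Algebra ℂ A]
    (L : Type*) [LieRing L] [LieAlgebra ℂ L] [Module A L]
    (act : L →ₗ⁅ℂ⁆ Derivation ℂ A A)
    (M : Type*) [AddCommGroup M] [Module ℂ M]
    (φ : A →ₐ[ℂ] Module.End ℂ M)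
    (ψ : (A × L) →ₗ[ℂ] Module.End ℂ M)
    (φh : (A × L) →ₗ[ℂ] Module.End ℂ M)
    (hψ : ∀ x y : A × L, ψ (qpBracket act x y) = ⁅ψ x, ψ y⁆)
    (h3 : ∀ x y : A × L, ⁅φh x, φh y⁆ = φh (qpMul x (y.1, 0)) - φh (qpMul (x.1, 0) y))
    (h4 : ∀ (a : A) (x : A × L), φh (qpMul (a, 0) x) = φ a * φh x)
    (h5 : ∀ (x : A × L) (a : A), ⁅φh x, φ a⁆ = 0)
    (h6 : ∀ x y : A × L,
      ⁅φh x, ψ y⁆ = φh (qpBracket act x y) - φ y.1 * ψ x + ψ (qpMul x (y.1, 0)))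
    (h7 : ∀ (x : A × L) (a : A), ⁅ψ x, φ a⁆ = φ (act x.2 a)) :
    ∀ (r s p : ℤ) (x y : A × L) (ω : M),
      (ψ (lBracket act r x s y) - (r + s) • φh (lBracket act r x s y)
          + p • φ (lBracket act r x s y).1) ω =
        (ψ x - r • φh x + (s + p) • φ x.1)
            ((ψ y - s • φh y + p • φ y.1) ω) -
          (ψ y - s • φh y + (r + p) • φ y.1)
            ((ψ x - r • φh x + p • φ x.1) ω) := by
  intro r s p x y ω
  exact LinearMap.congr_fun ((IsQPModule.mk hψ h3 h4 h5 h6 h7).lAction_lBracket r s p x y) ω
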